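/- arXiv:1901.05690 — 3 statements merged into one kernel-verified Lean document; each statement's English description precedes it below -/
import Mathlib

section
/- Let A and B be R-algebras each satisfying Z(A) = {a : [[a,x],y] = 0 for all x,y} (condition (♠)). If every Lie triple derivation of A is proper and every Lie triple derivation of B is proper, then every Lie triple derivation of the direct sum A ⊕ B is proper. -/
/-- The Lie bracket `[x,y] = xy - yx` in an associative algebra. -/
def lieBr {A : Type*} [Ring A] (x y : A) : A := x * y - y * x

/-- `L` is a Lie triple derivation. -/
def IsLieTripleDer {R A : Type*} [CommRing R] [Ring A] [Algebra R A]
    (L : A →ₗ[R] A) : Prop :=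
  ∀ x y z : A,
    L (lieBr (lieBr x y) z) =
      lieBr (lieBr (L x) y) z + lieBr (lieBr x (L y)) z + lieBr (lieBr x y) (L z)

/-- `L` is proper: the sum of a derivation and a central-valued linear map annihilating all
second commutators. -/
def IsProperLTD {R A : Type*} [CommRing R] [Ring A] [Algebra R A]
    (L : A →ₗ[R] A) : Prop :=
  ∃ D F : A →ₗ[R] A,
    (∀ x y : A, D (x * y) = D x * y + x * D y) ∧
    (∀ a : A, F a ∈ Set.center A) ∧
    (∀ x y z : A, F (lieBr (lieBr x y) z) = 0) ∧
    L = D + F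

/-- Condition (♠): the centre consists exactly of the elements killed by all double brackets. -/
def CondSpade (A : Type*) [Ring A] : Prop :=
  Set.center A = {a : A | ∀ x y : A, lieBr (lieBr a x) y = 0}

/-- If `A` and `B` satisfy condition (♠) and all Lie triple derivations of `A`
and of `B` are proper, then all Lie triple derivations of `A ⊕ B` are proper. -/
theorem prod_lieTripleDer_proper {R A B : Type*} [CommRing R] [Ring A] [Algebra R A]
    [Ring B] [Algebra R B]
    (hA : CondSpade A) (hB : CondSpade B)
    (hpA : ∀ L : A →ₗ[R] A, IsLieTripleDer L → IsProperLTD L)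
    (hpB : ∀ L : B →ₗ[R] B, IsLieTripleDer L → IsProperLTD L) :
    ∀ L : A × B →ₗ[R] A × B, IsLieTripleDer L → IsProperLTD L := by
  intro L hL
  -- off-diagonal components are central
  have h21c : ∀ a : A, (L (a, 0)).2 ∈ Set.center B := by
    intro a
    rw [hB]
    intro x y
    have h := congrArg Prod.snd (hL (a, 0) (0, x) (0, y))
    simp [lieBr, Prod.mk_mul_mk, Prod.mk_sub_mk] at h
    simpa [lieBr] using h.symm
  have h12c : ∀ b : B, (L (0, b)).1 ∈ Set.center A := by
    intro b
    rw [hA]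
    intro x y
    have h := congrArg Prod.fst (hL (0, b) (x, 0) (y, 0))
    simp [lieBr, Prod.mk_mul_mk, Prod.mk_sub_mk] at h
    simpa [lieBr] using h.symm
  -- off-diagonal components vanish on second commutators
  have h21z : ∀ x y z : A, (L (lieBr (lieBr x y) z, 0)).2 = 0 := by
    intro x y z
    have h := congrArg Prod.snd (hL (x, 0) (y, 0) (z, 0))
    simpa [lieBr, Prod.mk_mul_mk, Prod.mk_sub_mk] using h
  have h12z : ∀ x y z : B, (L (0, lieBr (lieBr x y) z)).1 = 0 := by
    intro x y z
    have h := congrArg Prod.fst (hL (0, x) (0, y) (0, z))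
    simpa [lieBr, Prod.mk_mul_mk, Prod.mk_sub_mk] using h
  -- diagonal components are Lie triple derivations
  have h11 : IsLieTripleDer ((LinearMap.fst R A B) ∘ₗ L ∘ₗ LinearMap.inl R A B) := by
    intro x y z
    have h := congrArg Prod.fst (hL (x, 0) (y, 0) (z, 0))
    simp [lieBr, Prod.mk_mul_mk, Prod.mk_sub_mk] at h
    simpa [lieBr] using h
  have h22 : IsLieTripleDer ((LinearMap.snd R A B) ∘ₗ L ∘ₗ LinearMap.inr R A B) := by
    intro x y z
    have h := congrArg Prod.snd (hL (0, x) (0, y) (0, z))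
    simp [lieBr, Prod.mk_mul_mk, Prod.mk_sub_mk] at h
    simpa [lieBr] using h
  obtain ⟨DA, FA, hDA, hFAc, hFA0, hLA⟩ := hpA _ h11
  obtain ⟨DB, FB, hDB, hFBc, hFB0, hLB⟩ := hpB _ h22
  have hLA' : ∀ a : A, (L (a, 0)).1 = DA a + FA a := by
    intro a
    have := LinearMap.congr_fun hLA a
    simpa using this
  have hLB' : ∀ b : B, (L (0, b)).2 = DB b + FB b := by
    intro b
    have := LinearMap.congr_fun hLB b
    simpa using this
  have hsplit : ∀ p : A × B, L p = L (p.1, 0) + L (0, p.2) := by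
    intro p
    rw [← map_add]
    congr 1
    simp
  refine ⟨(DA.prodMap DB), L - (DA.prodMap DB), ?_, ?_, ?_, by abel⟩
  · intro x y
    refine Prod.ext ?_ ?_ <;>
      simp [Prod.fst_mul, Prod.snd_mul, hDA, hDB]
  · intro p
    rw [Semigroup.mem_center_iff]
    intro g
    have hc1 : (L p - DA.prodMap DB p).1 ∈ Set.center A := by
      have : (L p - DA.prodMap DB p).1 = FA p.1 + (L (0, p.2)).1 := by
        rw [hsplit p]
        simp only [Prod.fst_add, Prod.fst_sub, LinearMap.sub_apply, LinearMap.prodMap_apply,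
           hLA' p.1]
        abel
      rw [this]
      exact Set.add_mem_center (hFAc p.1) (h12c p.2)
    have hc2 : (L p - DA.prodMap DB p).2 ∈ Set.center B := by
      have : (L p - DA.prodMap DB p).2 = FB p.2 + (L (p.1, 0)).2 := by
        rw [hsplit p]
        simp only [Prod.snd_add, Prod.snd_sub, LinearMap.sub_apply, LinearMap.prodMap_apply,
           hLB' p.2]
        abel
      rw [this]
      exact Set.add_mem_center (hFBc p.2) (h21c p.1)
    refine Prod.ext ?_ ?_
    · exact (Semigroup.mem_center_iff.mp hc1 g.1)
    · exact (Semigroup.mem_center_iff.mp hc2 g.2)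
  · intro p q r
    have hbr : lieBr (lieBr p q) r =
        (lieBr (lieBr p.1 q.1) r.1, lieBr (lieBr p.2 q.2) r.2) := rfl
    rw [LinearMap.sub_apply, hbr,
      hsplit (lieBr (lieBr p.1 q.1) r.1, lieBr (lieBr p.2 q.2) r.2)]
    refine Prod.ext ?_ ?_
    · simp only [Prod.fst_add, Prod.fst_sub, Prod.mk.injEq,
        LinearMap.prodMap_apply, Prod.fst_zero]
      rw [hLA', hFA0, h12z]
      abel
    · simp only [Prod.snd_add, Prod.snd_sub, Prod.mk.injEq,
        LinearMap.prodMap_apply, Prod.snd_zero]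
      rw [hLB', hFB0, h21z]
      abel
end

section
/- Let A and B be R-algebras each satisfying condition (♠). If every Lie triple derivation of A ⊕ B is proper, then every Lie triple derivation of A is proper. -/
lemma lieBr_prod {A B : Type*} [Ring A] [Ring B] (x y : A × B) :
    lieBr x y = (lieBr x.1 y.1, lieBr x.2 y.2) := rfl

/-- If `A` and `B` satisfy condition (♠) and every Lie triple derivation of
`A ⊕ B` is proper, then every Lie triple derivation of `A` is proper. -/
theorem lieTripleDer_proper_of_prod {R A B : Type*} [CommRing R] [Ring A] [Algebra R A]
    [Ring B] [Algebra R B]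
    (hA : CondSpade A) (hB : CondSpade B)
    (hp : ∀ L : A × B →ₗ[R] A × B, IsLieTripleDer L → IsProperLTD L) :
    ∀ L : A →ₗ[R] A, IsLieTripleDer L → IsProperLTD L := by
  intro L hL
  set L' : A × B →ₗ[R] A × B :=
    (LinearMap.inl R A B).comp (L.comp (LinearMap.fst R A B)) with hL'def
  have hL'app : ∀ p : A × B, L' p = (L p.1, 0) := fun p => rfl
  have hL' : IsLieTripleDer L' := by
    intro x y z
    simp only [hL'app, lieBr_prod]
    ext
    · exact hL x.1 y.1 z.1
    · simp [lieBr]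
  obtain ⟨D, F, hD, hF, hF2, hsum⟩ := hp L' hL'
  refine ⟨(LinearMap.fst R A B).comp (D.comp (LinearMap.inl R A B)),
    (LinearMap.fst R A B).comp (F.comp (LinearMap.inl R A B)), ?_, ?_, ?_, ?_⟩
  · intro x y
    have h := hD (x, 0) (y, 0)
    have hmul : ((x, 0) : A × B) * (y, 0) = (x * y, 0) := by ext <;> simp
    rw [hmul] at h
    have := congrArg Prod.fst h
    simpa using this
  · intro a
    have := hF (a, 0)
    rw [Semigroup.mem_center_iff] at this ⊢
    intro g
    have := congrArg Prod.fst (this (g, 0))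
    simpa using this
  · intro x y z
    have h := hF2 (x, 0) (y, 0) (z, 0)
    have : lieBr (lieBr ((x, 0) : A × B) (y, 0)) (z, 0) = (lieBr (lieBr x y) z, 0) := by
      simp [lieBr_prod, lieBr]
    rw [this] at h
    have := congrArg Prod.fst h
    simpa using this
  · ext a
    have := congrArg Prod.fst (congrFun (congrArg DFunLike.coe hsum) (a, 0))
    simpa [hL'app] using this
end

section
/- Let A, B be R-algebras satisfying condition (♠) and let L be a Lie triple derivation of A ⊕ B. Then L((a,b)) = (l_A(a) + h_B(b), h_A(a) + l_B(b)) where l_A is a Lie triple derivation of A, l_B is a Lie triple derivation of B, h_A: A → B is linear with h_A([[a₁,a₂],a₃]) = 0 and h_A(a) ∈ Z(B), and h_B: B → A is linear with h_B([[b₁,b₂],b₃]) = 0 and h_B(b) ∈ Z(A). -/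
/-! In `A × B` brackets are computed componentwise, so a double bracket of three elements of
`A × 0` lies in `A × 0`, and a double bracket mixing `A × 0` with `0 × B` vanishes. Feeding these
into the Lie triple derivation identity splits `L` into the four corners `A → A`, `B → A`,
`A → B`, `B → B`: the diagonal ones are Lie triple derivations, while the off-diagonal ones kill
double brackets and take values that are killed by all double brackets, hence central by (♠). -/

@[simp]
lemma lieBr_zero_left {A : Type*} [Ring A] (x : A) : lieBr 0 x = 0 := by
  simp [lieBr]

@[simp]
lemma lieBr_zero_right {A : Type*} [Ring A] (x : A) : lieBr x 0 = 0 := by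
  simp [lieBr]

@[simp]
lemma Prod.lieBr_mk_mk {A B : Type*} [Ring A] [Ring B] (a a' : A) (b b' : B) :
    lieBr (a, b) (a', b') = (lieBr a a', lieBr b b') :=
  rfl

@[simp]
lemma Prod.fst_lieBr {A B : Type*} [Ring A] [Ring B] (p q : A × B) :
    (lieBr p q).1 = lieBr p.1 q.1 :=
  rfl

@[simp]
lemma Prod.snd_lieBr {A B : Type*} [Ring A] [Ring B] (p q : A × B) :
    (lieBr p q).2 = lieBr p.2 q.2 :=
  rfl

lemma CondSpade.mem_center {A : Type*} [Ring A] (h : CondSpade A) {a : A}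
    (ha : ∀ x y : A, lieBr (lieBr a x) y = 0) : a ∈ Set.center A :=
  h ▸ ha

namespace IsLieTripleDer

variable {R A B : Type*} [CommRing R] [Ring A] [Algebra R A] [Ring B] [Algebra R B]
  {L : A × B →ₗ[R] A × B}

lemma apply_lieBr_lieBr_inl (hL : IsLieTripleDer L) (x y z : A) :
    L (lieBr (lieBr x y) z, 0) =
      (lieBr (lieBr (L (x, 0)).1 y) z + lieBr (lieBr x (L (y, 0)).1) z +
        lieBr (lieBr x y) (L (z, 0)).1, 0) := by
  simpa [Prod.ext_iff] using hL (x, 0) (y, 0) (z, 0)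

lemma apply_lieBr_lieBr_inr (hL : IsLieTripleDer L) (x y z : B) :
    L (0, lieBr (lieBr x y) z) =
      (0, lieBr (lieBr (L (0, x)).2 y) z + lieBr (lieBr x (L (0, y)).2) z +
        lieBr (lieBr x y) (L (0, z)).2) := by
  simpa [Prod.ext_iff] using hL (0, x) (0, y) (0, z)

lemma lieBr_lieBr_snd_apply_inl (hL : IsLieTripleDer L) (a : A) (u v : B) :
    lieBr (lieBr (L (a, 0)).2 u) v = 0 := by
  simpa [Prod.mk_zero_zero] using (congrArg Prod.snd (hL (a, 0) (0, u) (0, v))).symm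

lemma lieBr_lieBr_fst_apply_inr (hL : IsLieTripleDer L) (b : B) (u v : A) :
    lieBr (lieBr (L (0, b)).1 u) v = 0 := by
  simpa [Prod.mk_zero_zero] using (congrArg Prod.fst (hL (0, b) (u, 0) (v, 0))).symm

lemma fst_comp_inl (hL : IsLieTripleDer L) :
    IsLieTripleDer (LinearMap.fst R A B ∘ₗ L ∘ₗ LinearMap.inl R A B) := fun x y z => by
  simpa using congrArg Prod.fst (hL.apply_lieBr_lieBr_inl x y z)

lemma snd_comp_inr (hL : IsLieTripleDer L) :
    IsLieTripleDer (LinearMap.snd R A B ∘ₗ L ∘ₗ LinearMap.inr R A B) := fun x y z => by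
  simpa using congrArg Prod.snd (hL.apply_lieBr_lieBr_inr x y z)

end IsLieTripleDer

/-- Decomposition of a Lie triple derivation of `A ⊕ B`. -/
theorem lieTripleDer_prod_decomposition {R A B : Type*} [CommRing R] [Ring A] [Algebra R A]
    [Ring B] [Algebra R B]
    (hA : CondSpade A) (hB : CondSpade B)
    (L : A × B →ₗ[R] A × B) (hL : IsLieTripleDer L) :
    ∃ (lA : A →ₗ[R] A) (lB : B →ₗ[R] B) (hmapA : A →ₗ[R] B) (hmapB : B →ₗ[R] A),
      IsLieTripleDer lA ∧ IsLieTripleDer lB ∧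
      (∀ a₁ a₂ a₃ : A, hmapA (lieBr (lieBr a₁ a₂) a₃) = 0) ∧
      (∀ a : A, hmapA a ∈ Set.center B) ∧
      (∀ b₁ b₂ b₃ : B, hmapB (lieBr (lieBr b₁ b₂) b₃) = 0) ∧
      (∀ b : B, hmapB b ∈ Set.center A) ∧
      (∀ (a : A) (b : B), L (a, b) = (lA a + hmapB b, hmapA a + lB b)) := by
  refine ⟨LinearMap.fst R A B ∘ₗ L ∘ₗ LinearMap.inl R A B,
    LinearMap.snd R A B ∘ₗ L ∘ₗ LinearMap.inr R A B,
    LinearMap.snd R A B ∘ₗ L ∘ₗ LinearMap.inl R A B,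
    LinearMap.fst R A B ∘ₗ L ∘ₗ LinearMap.inr R A B,
    hL.fst_comp_inl, hL.snd_comp_inr,
    fun x y z => by simpa using congrArg Prod.snd (hL.apply_lieBr_lieBr_inl x y z),
    fun a => hB.mem_center (hL.lieBr_lieBr_snd_apply_inl a),
    fun x y z => by simpa using congrArg Prod.fst (hL.apply_lieBr_lieBr_inr x y z),
    fun b => hA.mem_center (hL.lieBr_lieBr_fst_apply_inr b),
    fun a b => ?_⟩
  rw [← Prod.fst_add_snd (a, b), map_add]
  rfl
end
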